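/- arXiv:2301.13452 — 3 statements merged into one kernel-verified Lean document; each statement's English description precedes it below -/
import Mathlib

section
/- For a permutation σ ∈ S_n written as σ = (n-1, i_{n-1}) ⋯ (2, i_2)(1, i_1) with k ≤ i_k ≤ n for each k, the number of indices k in {1, …, n} with i_k = k (using the convention i_n = n) equals the number of cycles in the disjoint cycle decomposition of σ (counting fixed points as 1-cycles). -/
/-!
Let `σₖ` be the product of the factors `(j, i_j)` with `j ≥ k`, so that `σₖ = σₖ₊₁ (k, i_k)`.
All points moved by `σₖ₊₁` exceed `k`, since `k < j ≤ i_j`; so `σₖ₊₁` fixes `k`, and when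
`i_k ≠ k` the right factor `(k, i_k)` joins the fixed point `k` to the cycle of `i_k`, lowering
the number of cycles by one. Starting from the identity with its `n` cycles, `σ = σ₀` ends up
with `n - #{k | i_k ≠ k} = #{k | i_k = k}` cycles.
-/

/-- The permutation `(n-1, i_{n-1}) ⋯ (1, i_1)(0, i_0)` (0-indexed), where the
transposition with index `0` is applied first. -/
def pivotProd (n : ℕ) (i : Fin n → Fin n) : Equiv.Perm (Fin n) :=
  ((List.ofFn fun k : Fin n => Equiv.swap k (i k)).reverse).prod

open Finset

theorem List.countP_ofFn {β : Type*} {n : ℕ} (f : Fin n → β) (p : β → Prop) [DecidablePred p] :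
    (List.ofFn f).countP (fun b => p b) = #{k | p (f k)} := by
  rw [← Multiset.coe_countP, ← Fin.univ_val_map, Multiset.countP_map]
  rfl

namespace Equiv.Perm

theorem list_prod_apply_eq_self {α : Type*} {l : List (Perm α)} {a : α} (h : ∀ σ ∈ l, σ a = a) :
    l.prod a = a :=
  (MulAction.stabilizer (Perm α) a).list_prod_mem h

variable {α : Type*} [Fintype α] [DecidableEq α]

/-- The number of cycles of `σ`, fixed points counted as 1-cycles. -/
def cycleCount (σ : Perm α) : ℕ :=
  Multiset.card σ.cycleType + #{x | σ x = x}

theorem cycleCount_add_card_support (σ : Perm α) :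
    σ.cycleCount + #σ.support = Multiset.card σ.cycleType + Fintype.card α := by
  rw [cycleCount, add_assoc, support, card_filter_add_card_filter_not, card_univ]

@[simp]
theorem cycleCount_one : cycleCount (1 : Perm α) = Fintype.card α := by
  simp [cycleCount]

@[simp]
theorem cycleCount_inv (σ : Perm α) : σ⁻¹.cycleCount = σ.cycleCount := by
  simp only [cycleCount, cycleType_inv, inv_eq_iff_eq]
  simp_rw [eq_comm]

theorem Disjoint.cycleCount_mul {σ τ : Perm α} (h : Disjoint σ τ) :
    (σ * τ).cycleCount + Fintype.card α = σ.cycleCount + τ.cycleCount := by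
  have := cycleCount_add_card_support (σ * τ)
  have := cycleCount_add_card_support σ
  have := cycleCount_add_card_support τ
  rw [h.cycleType_mul, Multiset.card_add, h.card_support_mul] at *
  omega

theorem IsCycle.cycleCount_add_card_support {c : Perm α} (hc : IsCycle c) :
    c.cycleCount + #c.support = Fintype.card α + 1 := by
  rw [c.cycleCount_add_card_support, hc.cycleType, Multiset.card_singleton, add_comm]

theorem IsCycle.cycleCount_swap_mul {c : Perm α} (hc : IsCycle c) {x : α} (hx : c x ≠ x) :
    (swap x (c x) * c).cycleCount = c.cycleCount + 1 := by
  have hcount := hc.cycleCount_add_card_support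
  by_cases hccx : c (c x) = x
  · have hswap : c = swap x (c x) := hc.eq_swap_of_apply_apply_eq_self hx hccx
    have hsupp : #c.support = 2 := by rw [hswap]; exact card_support_swap hx.symm
    have hone : swap x (c x) * c = 1 := by
      rw [mul_eq_one_iff_inv_eq, swap_inv]
      exact hswap.symm
    rw [hone, cycleCount_one]
    omega
  · have hsupp : #(swap x (c x) * c).support + 1 = #c.support := by
      rw [support_swap_mul_eq c x hccx, sdiff_singleton_eq_erase,
        card_erase_add_one (mem_support.2 hx)]
    have := (hc.swap_mul hx hccx).cycleCount_add_card_support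
    omega

theorem cycleCount_swap_mul {f : Perm α} {x : α} (hx : f x ≠ x) :
    (swap x (f x) * f).cycleCount = f.cycleCount + 1 := by
  set c := f.cycleOf x
  have hc : IsCycle c := isCycle_cycleOf f hx
  have hcx : c x = f x := cycleOf_apply_self f x
  have hdisj : Disjoint (f * c⁻¹) c := disjoint_mul_inv_of_mem_cycleFactorsFinset
    (cycleOf_mem_cycleFactorsFinset_iff.mpr (mem_support.mpr hx))
  have hf : f = c * (f * c⁻¹) := (inv_mul_cancel_right f c).symm.trans hdisj.commute.eq
  have hsplit : Disjoint (swap x (c x) * c) (f * c⁻¹) :=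
    hdisj.symm.mono (fun y hy => (mem_support_swap_mul_imp_mem_support_ne hy).1) subset_rfl
  have hcount_f := hdisj.symm.cycleCount_mul
  have hcount_split := hsplit.cycleCount_mul
  have hcount_c := hc.cycleCount_swap_mul (hcx ▸ hx)
  rw [← hf] at hcount_f
  rw [mul_assoc, ← hf] at hcount_split
  rw [← hcx]
  omega

/-- Inverting both sides turns this join of the fixed point `a` into the cycle of `b` into the
split of `cycleCount_swap_mul`. -/
theorem cycleCount_mul_swap_of_apply_eq_self {σ : Perm α} {a b : α} (ha : σ a = a)
    (hab : a ≠ b) : (σ * swap a b).cycleCount + 1 = σ.cycleCount := by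
  have hfa : (σ * swap a b)⁻¹ a = b := by
    rw [mul_inv_rev, swap_inv, mul_apply, inv_eq_iff_eq.mpr ha.symm, swap_apply_left]
  have hσ : σ⁻¹ = swap a ((σ * swap a b)⁻¹ a) * (σ * swap a b)⁻¹ := by
    rw [hfa, mul_inv_rev, swap_inv, swap_mul_self_mul]
  rw [← cycleCount_inv σ, hσ, cycleCount_swap_mul (by rw [hfa]; exact hab.symm), cycleCount_inv]

theorem cycleCount_prod_swap_add_length (l : List (α × α))
    (hl : l.Pairwise fun p q => p.1 ≠ q.1 ∧ p.1 ≠ q.2) :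
    ((l.map fun p => swap p.1 p.2).reverse.prod).cycleCount + l.length
      = Fintype.card α + l.countP (fun p => p.1 = p.2) := by
  induction l with
  | nil => simp
  | cons p l ih =>
    obtain ⟨hp, hl⟩ := List.pairwise_cons.mp hl
    have hfix : ((l.map fun p => swap p.1 p.2).reverse.prod) p.1 = p.1 := by
      refine list_prod_apply_eq_self fun σ hσ => ?_
      obtain ⟨q, hq, rfl⟩ := List.mem_map.mp (List.mem_reverse.mp hσ)
      exact swap_apply_of_ne_of_ne (hp q hq).1 (hp q hq).2
    simp only [List.map_cons, List.reverse_cons, List.prod_append, List.prod_singleton,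
      List.length_cons, List.countP_cons]
    have := ih hl
    by_cases h : p.1 = p.2
    · simp only [h, swap_self, ← one_def, mul_one, decide_true, if_true]
      omega
    · have := cycleCount_mul_swap_of_apply_eq_self hfix h
      simp only [h, decide_false, Bool.false_eq_true, if_false]
      omega

end Equiv.Perm

/-- For `σ = (n-1, i_{n-1}) ⋯ (1, i_1)` with `k ≤ i_k`, the number of indices with
`i_k = k` equals the number of cycles of `σ` (fixed points counted as 1-cycles,
so the cycle count is `σ.cycleType.card` plus the number of fixed points). -/
theorem stmt1 (n : ℕ) (i : Fin n → Fin n) (h : ∀ k, k ≤ i k) :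
    (Finset.univ.filter fun k : Fin n => i k = k).card =
      (pivotProd n i).cycleType.card +
        (Finset.univ.filter fun x : Fin n => pivotProd n i x = x).card := by
  have hprod : pivotProd n i =
      ((List.ofFn fun k => (k, i k)).map fun p => Equiv.swap p.1 p.2).reverse.prod := by
    rw [pivotProd, List.map_ofFn]
    rfl
  have hpairs : (List.ofFn fun k => (k, i k)).Pairwise fun p q => p.1 ≠ q.1 ∧ p.1 ≠ q.2 :=
    List.pairwise_ofFn.mpr fun k l hkl => ⟨hkl.ne, (hkl.trans_le (h l)).ne⟩
  have hcount := Equiv.Perm.cycleCount_prod_swap_add_length _ hpairs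
  rw [← hprod, List.length_ofFn, List.countP_ofFn, Fintype.card_fin] at hcount
  simp only [@eq_comm _ _ (i _)] at hcount
  change _ = (pivotProd n i).cycleCount
  omega
end

section
/- A permutation σ = (n-1, i_{n-1}) ⋯ (2, i_2)(1, i_1) with k ≤ i_k ≤ n for all k is an n-cycle if and only if i_k > k for all k = 1, …, n-1. Consequently, if each i_k is chosen independently and uniformly from {k+1, …, n}, the resulting permutation is a uniformly random n-cycle. -/
instance instNonemptyStrictPivotTuples (n : ℕ) :
    Nonempty {f : Fin n → Fin n //
      (∀ k, k ≤ f k) ∧ ∀ k : Fin n, (k : ℕ) < n - 1 → k < f k} := by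
  refine ⟨⟨fun k => if h : (k : ℕ) + 1 < n then ⟨(k : ℕ) + 1, h⟩ else k, ?_, ?_⟩⟩
  · intro k
    by_cases h : (k : ℕ) + 1 < n
    · simp only [dif_pos h]
      exact le_of_lt (by simp [Fin.lt_def])
    · simp [dif_neg h]
  · intro k hk
    have h : (k : ℕ) + 1 < n := by omega
    simp only [dif_pos h]
    simp [Fin.lt_def]

open scoped Nat ENNReal
open Equiv Equiv.Perm

namespace Equiv.Perm

variable {α : Type*} [DecidableEq α]

theorem sameCycle_mul_swap_iff [Finite α] {τ : Perm α} {x a y : α} (hx : τ x = x)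
    (hxa : x ≠ a) (hy : y ≠ x) : (τ * swap x a).SameCycle x y ↔ τ.SameCycle a y := by
  set σ := τ * swap x a
  have hσx : σ x = τ a := by simp [σ]
  have hσa : σ a = x := by simp [σ, hx]
  have hσ : ∀ z, z ≠ x → z ≠ a → σ z = τ z := fun z hzx hza => by
    simp [σ, swap_apply_of_ne_of_ne hzx hza]
  constructor
  · intro h
    obtain ⟨t, -, rfl⟩ := h.exists_pow_eq'
    have hmaps : Set.MapsTo σ {z | z = x ∨ τ.SameCycle a z} {z | z = x ∨ τ.SameCycle a z} := by
      rintro z (rfl | hz)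
      · exact Or.inr (hσx ▸ sameCycle_apply_right.mpr (.refl τ a))
      · by_cases hza : z = a
        · exact Or.inl (hza ▸ hσa)
        · by_cases hzx : z = x
          · exact Or.inr (hzx ▸ hσx ▸ sameCycle_apply_right.mpr (.refl τ a))
          · exact Or.inr (hσ z hzx hza ▸ sameCycle_apply_right.mpr hz)
    exact ((hmaps.perm_pow t) (Or.inl rfl)).resolve_left hy
  · intro h
    obtain ⟨t, -, rfl⟩ := h.exists_pow_eq'
    have hmaps : Set.MapsTo τ {z | z ≠ x ∧ σ.SameCycle x z} {z | z ≠ x ∧ σ.SameCycle x z} := by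
      rintro z ⟨hzx, hz⟩
      refine ⟨fun h => hzx (τ.injective (h.trans hx.symm)), ?_⟩
      by_cases hza : z = a
      · exact hza ▸ hσx ▸ sameCycle_apply_right.mpr (.refl σ x)
      · exact hσ z hzx hza ▸ sameCycle_apply_right.mpr hz
    exact (hmaps.perm_pow t ⟨hxa.symm, sameCycle_apply_right.mp (by rw [hσa])⟩).2

theorem card_cycleType_add_card_fixed_eq_one_iff [Fintype α] [Nonempty α] {σ : Perm α} :
    σ.cycleType.card + (Finset.univ.filter fun x => σ x = x).card = 1 ↔
      ∀ x y, σ.SameCycle x y := by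
  constructor
  · intro h x y
    rcases Nat.eq_zero_or_pos σ.cycleType.card with hc | hc
    · obtain rfl := card_cycleType_eq_zero.mp hc
      have : Subsingleton α := Fintype.card_le_one_iff_subsingleton.mp (by simp_all)
      exact Subsingleton.elim x y ▸ .refl 1 x
    · have hcyc : σ.IsCycle := card_cycleType_eq_one.mp (by omega)
      have hnone : (Finset.univ.filter fun z => σ z = z) = ∅ := Finset.card_eq_zero.mp (by omega)
      have hmoved : ∀ z, σ z ≠ z := fun z => Finset.filter_eq_empty_iff.mp hnone (Finset.mem_univ z)
      exact hcyc.sameCycle (hmoved x) (hmoved y)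
  · intro h
    by_cases hfix : ∃ x, σ x = x
    · obtain ⟨x, hx⟩ := hfix
      obtain rfl : σ = 1 := Equiv.ext fun y => ((h x y).apply_eq_self_iff).mp hx
      have : Subsingleton α := ⟨fun y z => sameCycle_one.mp (h y z)⟩
      simpa [Fintype.card_eq_one_iff_nonempty_unique] using ⟨uniqueOfSubsingleton x⟩
    · push Not at hfix
      obtain ⟨x⟩ := ‹Nonempty α›
      have hcyc : σ.IsCycle := ⟨x, hfix x, fun y _ => h x y⟩
      simp [card_cycleType_eq_one.mpr hcyc, hfix]

end Equiv.Perm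

theorem PMF.map_uniformOfFintype_apply_of_unique {α β : Type*} [Fintype α] [Nonempty α]
    {g : α → β} {a : α} (ha : ∀ b, g b = g a → b = a) :
    (PMF.uniformOfFintype α).map g (g a) = (Fintype.card α : ℝ≥0∞)⁻¹ := by
  rw [PMF.map_apply, tsum_eq_single a fun b hb => if_neg fun h => hb (ha b h.symm)]
  simp

section Pivot

variable {n : ℕ}

-- `σ_m` of the header: the factors of `pivotProd n i` with index `≥ m`.
def pivotSuffix (i : Fin n → Fin n) (m : ℕ) : Perm (Fin n) :=
  ((List.ofFn fun k : Fin n => swap k (i k)).drop m).reverse.prod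

theorem pivotSuffix_zero (i : Fin n → Fin n) : pivotSuffix i 0 = pivotProd n i := rfl

theorem pivotSuffix_of_le (i : Fin n → Fin n) {m : ℕ} (hm : n ≤ m) : pivotSuffix i m = 1 := by
  simp [pivotSuffix, List.drop_eq_nil_of_le, hm]

theorem pivotSuffix_eq_mul_swap (i : Fin n → Fin n) {m : ℕ} (hm : m < n) :
    pivotSuffix i m = pivotSuffix i (m + 1) * swap ⟨m, hm⟩ (i ⟨m, hm⟩) := by
  rw [pivotSuffix, List.drop_eq_getElem_cons (by simpa using hm)]
  simp [pivotSuffix]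

theorem pivotSuffix_congr {f g : Fin n → Fin n} {m : ℕ} (h : ∀ k : Fin n, m ≤ k → f k = g k) :
    pivotSuffix f m = pivotSuffix g m := by
  unfold pivotSuffix
  congr 2
  apply List.ext_getElem (by simp)
  intro k _ _
  simp only [List.getElem_drop, List.getElem_ofFn]
  rw [h _ (by simp)]

theorem pivotSuffix_apply_of_lt {i : Fin n → Fin n} (hi : ∀ k, k ≤ i k) {m : ℕ} (hm : m ≤ n)
    {j : Fin n} (hj : j < m) : pivotSuffix i m j = j := by
  induction hm using Nat.decreasingInduction with
  | self => rw [pivotSuffix_of_le i le_rfl]; rfl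
  | of_succ m hm ih =>
    have hjm : j < ⟨m, hm⟩ := hj
    rw [pivotSuffix_eq_mul_swap i hm, mul_apply,
      swap_apply_of_ne_of_ne hjm.ne (hjm.trans_le (hi _)).ne]
    exact ih (by omega)

theorem pivotSuffix_apply_apply {i : Fin n → Fin n} (hi : ∀ k, k ≤ i k) {m : ℕ} (hm : m < n) :
    pivotSuffix i m (i ⟨m, hm⟩) = ⟨m, hm⟩ := by
  rw [pivotSuffix_eq_mul_swap i hm, mul_apply, swap_apply_right]
  exact pivotSuffix_apply_of_lt hi hm (lt_add_one m)

theorem eq_of_pivotSuffix_eq {f g : Fin n → Fin n} (hf : ∀ k, k ≤ f k) (hg : ∀ k, k ≤ g k)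
    {m : ℕ} (hm : m ≤ n) (h : pivotSuffix f m = pivotSuffix g m) {k : Fin n} (hk : m ≤ k) :
    f k = g k := by
  induction hm using Nat.decreasingInduction with
  | self => exact absurd k.isLt (by omega)
  | of_succ m hm ih =>
    have hfg : f ⟨m, hm⟩ = g ⟨m, hm⟩ := (pivotSuffix f m).injective <| by
      rw [pivotSuffix_apply_apply hf, h, pivotSuffix_apply_apply hg]
    obtain hkm | hkm := (show (k : ℕ) = m ∨ m + 1 ≤ k by omega)
    · obtain rfl : k = ⟨m, hm⟩ := Fin.ext hkm
      exact hfg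
    · refine ih (mul_right_cancel (b := swap ⟨m, hm⟩ (f ⟨m, hm⟩)) ?_) hkm
      rw [← pivotSuffix_eq_mul_swap, h, pivotSuffix_eq_mul_swap g hm, hfg]

theorem eq_of_pivotProd_eq {f g : Fin n → Fin n} (hf : ∀ k, k ≤ f k) (hg : ∀ k, k ≤ g k)
    (h : pivotProd n f = pivotProd n g) : f = g :=
  funext fun _ => eq_of_pivotSuffix_eq hf hg (Nat.zero_le n) h (Nat.zero_le _)

theorem exists_pivotSuffix_eq {m : ℕ} (hm : m ≤ n) {σ : Perm (Fin n)}
    (hσ : ∀ j : Fin n, j < m → σ j = j) :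
    ∃ i : Fin n → Fin n, (∀ k, k ≤ i k) ∧ pivotSuffix i m = σ := by
  induction hm using Nat.decreasingInduction generalizing σ with
  | self =>
    refine ⟨id, fun k => le_rfl, ?_⟩
    ext j
    simp [pivotSuffix_of_le, hσ j j.isLt]
  | of_succ m hm ih =>
    set x : Fin n := ⟨m, hm⟩
    set a := σ⁻¹ x
    have hσa : σ a = x := σ.apply_symm_apply x
    have hxa : x ≤ a := by
      by_contra! hax
      exact hax.ne (hσ a hax ▸ hσa)
    obtain ⟨i, hi, hiσ⟩ := ih (σ := σ * swap x a) fun j hj => by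
      obtain hjm | rfl := (show j < x ∨ j = x from lt_or_eq_of_le (Nat.le_of_lt_succ hj))
      · rw [mul_apply, swap_apply_of_ne_of_ne hjm.ne (hjm.trans_le hxa).ne, hσ j hjm]
      · rw [mul_apply, swap_apply_left, hσa]
    refine ⟨Function.update i x a, fun k => ?_, ?_⟩
    · by_cases hk : k = x
      · subst hk; simpa using hxa
      · simpa [hk] using hi k
    · have hupd : ∀ k : Fin n, m + 1 ≤ k → Function.update i x a k = i k := fun k hk =>
        Function.update_of_ne (show x < k from hk).ne' _ _
      rw [pivotSuffix_eq_mul_swap _ hm, pivotSuffix_congr hupd, hiσ, Function.update_self,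
        mul_swap_mul_self]

def SameCycleFrom (σ : Perm (Fin n)) (m : ℕ) : Prop :=
  ∀ j k : Fin n, m ≤ j → m ≤ k → σ.SameCycle j k

theorem sameCycleFrom_mul_swap_iff {τ : Perm (Fin n)} {m : ℕ} (hm : m < n)
    (hτ : τ ⟨m, hm⟩ = ⟨m, hm⟩) {a : Fin n} (ha : ⟨m, hm⟩ < a) :
    SameCycleFrom (τ * swap ⟨m, hm⟩ a) m ↔ SameCycleFrom τ (m + 1) := by
  set x : Fin n := ⟨m, hm⟩
  have key : ∀ y : Fin n, m + 1 ≤ y → ((τ * swap x a).SameCycle x y ↔ τ.SameCycle a y) :=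
    fun y hy => sameCycle_mul_swap_iff hτ ha.ne (show x < y from hy).ne'
  constructor
  · intro h j k hj hk
    exact ((key j hj).mp (h x j le_rfl (by omega))).symm.trans
      ((key k hk).mp (h x k le_rfl (by omega)))
  · intro h
    have hx : ∀ y : Fin n, m ≤ y → (τ * swap x a).SameCycle x y := fun y hy => by
      obtain hyx | hy := (show (y : ℕ) = m ∨ m + 1 ≤ y by omega)
      · obtain rfl : y = x := Fin.ext hyx
        rfl
      · exact (key y hy).mpr (h a y ha hy)
    exact fun j k hj hk => (hx j hj).symm.trans (hx k hk)

theorem sameCycleFrom_iff_of_apply_eq_self {τ : Perm (Fin n)} {m : ℕ} (hm : m < n)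
    (hτ : τ ⟨m, hm⟩ = ⟨m, hm⟩) : SameCycleFrom τ m ↔ n = m + 1 := by
  constructor
  · intro h
    by_contra hne
    have hm1 : m + 1 < n := by omega
    have := (h ⟨m, hm⟩ ⟨m + 1, hm1⟩ le_rfl (Nat.le_succ m)).eq_of_left hτ
    simp [Fin.ext_iff] at this
  · rintro rfl j k hj hk
    obtain rfl : j = k := Fin.ext (by omega)
    rfl

theorem sameCycleFrom_pivotSuffix_iff {i : Fin n → Fin n} (hi : ∀ k, k ≤ i k) {m : ℕ}
    (hm : m ≤ n) :
    SameCycleFrom (pivotSuffix i m) m ↔ ∀ k : Fin n, m ≤ k → (k : ℕ) < n - 1 → k < i k := by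
  induction hm using Nat.decreasingInduction with
  | self => exact iff_of_true (fun j _ hj => by omega) (fun k hk => by omega)
  | of_succ m hm ih =>
    have hfix := pivotSuffix_apply_of_lt hi hm (j := ⟨m, hm⟩) (lt_add_one m)
    rw [pivotSuffix_eq_mul_swap i hm]
    obtain heq | hlt := (hi ⟨m, hm⟩).eq_or_lt
    · rw [← heq, swap_self, ← Perm.one_def, mul_one, sameCycleFrom_iff_of_apply_eq_self hm hfix]
      constructor
      · intro h k hk hk'
        omega
      · intro h
        by_contra hne
        exact (h ⟨m, hm⟩ le_rfl (show m < n - 1 by omega)).ne heq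
    · rw [sameCycleFrom_mul_swap_iff hm hfix hlt, ih]
      constructor
      · intro h k hk hk'
        obtain hkm | hk := (show (k : ℕ) = m ∨ m + 1 ≤ k by omega)
        · obtain rfl : k = ⟨m, hm⟩ := Fin.ext hkm
          exact hlt
        · exact h k hk hk'
      · exact fun h k hk => h k (by omega)

theorem exists_pivotProd_eq (σ : Perm (Fin n)) :
    ∃ i : Fin n → Fin n, (∀ k, k ≤ i k) ∧ pivotProd n i = σ :=
  exists_pivotSuffix_eq (Nat.zero_le n) fun _ hj => absurd hj (Nat.not_lt_zero _)

theorem sameCycle_pivotProd_iff {i : Fin n → Fin n} (hi : ∀ k, k ≤ i k) :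
    (∀ j k, (pivotProd n i).SameCycle j k) ↔ ∀ k : Fin n, (k : ℕ) < n - 1 → k < i k := by
  simpa [SameCycleFrom, pivotSuffix_zero] using sameCycleFrom_pivotSuffix_iff hi (Nat.zero_le n)

end Pivot

theorem card_strictPivotTuples (n : ℕ) :
    Fintype.card {f : Fin n → Fin n //
      (∀ k, k ≤ f k) ∧ ∀ k : Fin n, (k : ℕ) < n - 1 → k < f k} = (n - 1)! := by
  obtain _ | m := n
  · rfl
  let t : Fin (m + 1) → Finset (Fin (m + 1)) := fun k =>
    if (k : ℕ) < m then Finset.Ioi k else Finset.Ici k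
  have ht : (Finset.univ.filter fun f : Fin (m + 1) → Fin (m + 1) =>
      (∀ k, k ≤ f k) ∧ ∀ k : Fin (m + 1), (k : ℕ) < m + 1 - 1 → k < f k) =
      Fintype.piFinset t := by
    ext f
    simp only [Finset.mem_filter, Finset.mem_univ, true_and, Fintype.mem_piFinset, t]
    rw [Nat.add_sub_cancel, ← forall_and]
    refine forall_congr' fun k => ?_
    split_ifs with hk
    · simpa [hk] using le_of_lt
    · simp [hk]
  rw [Fintype.card_subtype, ht, Fintype.card_piFinset, Fin.prod_univ_castSucc]
  simp only [t, Fin.val_castSucc, Fin.is_lt, ↓reduceIte, Fin.card_Ioi, add_tsub_cancel_right,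
    Fin.val_last, lt_self_iff_false, Fin.card_Ici, add_tsub_cancel_left, mul_one]
  rw [Fin.prod_univ_eq_prod_range (fun i => m - i), ← Nat.descFactorial_eq_prod_range,
    Nat.descFactorial_self]

/-- A permutation `σ = (n-1, i_{n-1}) ⋯ (1, i_1)` with `k ≤ i_k` is an `n`-cycle
(exactly one orbit, i.e. one cycle counting fixed points as 1-cycles) iff
`i_k > k` for all `k` below the top index; and choosing the `i_k` independently and
uniformly with `i_k > k` yields a uniformly random `n`-cycle (each `n`-cycle gets
probability `1/(n-1)!`). -/
theorem stmt9 (n : ℕ) (hn : 0 < n) :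
    (∀ i : Fin n → Fin n, (∀ k, k ≤ i k) →
      (((pivotProd n i).cycleType.card +
          (Finset.univ.filter fun x : Fin n => pivotProd n i x = x).card = 1)
        ↔ ∀ k : Fin n, (k : ℕ) < n - 1 → k < i k)) ∧
    (∀ σ : Equiv.Perm (Fin n),
      σ.cycleType.card + (Finset.univ.filter fun x : Fin n => σ x = x).card = 1 →
      ((PMF.uniformOfFintype {f : Fin n → Fin n //
            (∀ k, k ≤ f k) ∧ ∀ k : Fin n, (k : ℕ) < n - 1 → k < f k}).map
          (fun i => pivotProd n i.1)) σ = ((n - 1).factorial : ENNReal)⁻¹) := by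
  have : Nonempty (Fin n) := ⟨⟨0, hn⟩⟩
  have hcycle_iff : ∀ i : Fin n → Fin n, (∀ k, k ≤ i k) → _ := fun _ hi =>
    card_cycleType_add_card_fixed_eq_one_iff.trans (sameCycle_pivotProd_iff hi)
  refine ⟨hcycle_iff, fun σ hσ => ?_⟩
  obtain ⟨i, hi, rfl⟩ := exists_pivotProd_eq σ
  let s : {f : Fin n → Fin n // (∀ k, k ≤ f k) ∧ ∀ k : Fin n, (k : ℕ) < n - 1 → k < f k} :=
    ⟨i, hi, (hcycle_iff i hi).mp hσ⟩
  have hprob := PMF.map_uniformOfFintype_apply_of_unique (g := fun f => pivotProd n f.1) (a := s)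
    fun f hf => Subtype.ext (eq_of_pivotProd_eq f.2.1 hi hf)
  rw [card_strictPivotTuples] at hprob
  exact hprob
end

section
/- Let Z₁, Z₂, Z₃ be independent standard real Gaussians. Then P(Z₁² + Z₂² > 2 Z₃²) = 1/√3. -/
/-!
The standard Gaussian measure on `ℝ²` has the radial density `(2π)⁻¹ e^{-(x² + y²)/2}`, so in
polar coordinates `P(Z₁² + Z₂² > c) = ∫_{√c}^∞ r e^{-r²/2} dr = e^{-c/2}`. Integrating this over
the independent `Z₃` with `c = 2 Z₃²` leaves the Gaussian integral `E[e^{-Z₃²}] = 1/√3`.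
-/

open MeasureTheory ProbabilityTheory Real Set Filter Topology

lemma integral_Ioi_mul_exp_neg_mul_sq {b : ℝ} (hb : 0 < b) (a : ℝ) :
    ∫ r in Ioi a, r * exp (-b * r ^ 2) = exp (-b * a ^ 2) / (2 * b) := by
  have hderiv (x : ℝ) : HasDerivAt (fun r ↦ -exp (-b * r ^ 2) / (2 * b))
      (x * exp (-b * x ^ 2)) x := by
    refine (((hasDerivAt_pow 2 x).const_mul (-b)).exp.neg.div_const (2 * b)).congr_deriv ?_
    field_simp
    ring
  have hlim : Tendsto (fun r ↦ -exp (-b * r ^ 2) / (2 * b)) atTop (𝓝 (-0 / (2 * b))) :=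
    ((tendsto_exp_atBot.comp ((tendsto_pow_atTop two_ne_zero).const_mul_atTop_of_neg
      (neg_lt_zero.2 hb))).neg).div_const _
  rw [integral_Ioi_of_hasDerivAt_of_tendsto' (fun x _ ↦ hderiv x)
    (integrable_mul_exp_neg_mul_sq hb).integrableOn hlim]
  ring

lemma integral_comp_sq_add_sq (f : ℝ → ℝ) :
    ∫ p : ℝ × ℝ, f (p.1 ^ 2 + p.2 ^ 2) = 2 * π * ∫ r in Ioi 0, r * f (r ^ 2) := by
  rw [← integral_comp_polarCoord_symm]
  have hpolar : ∀ p : ℝ × ℝ, p.1 • f ((polarCoord.symm p).1 ^ 2 + (polarCoord.symm p).2 ^ 2)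
      = p.1 * f (p.1 ^ 2) := by
    intro p
    rw [polarCoord_symm_apply, smul_eq_mul, mul_pow, mul_pow, ← mul_add,
      cos_sq_add_sin_sq, mul_one]
  simp_rw [hpolar]
  rw [show polarCoord.target = Ioi (0 : ℝ) ×ˢ Ioo (-π) π from rfl, Measure.volume_eq_prod,
    ← Measure.prod_restrict, integral_fun_fst (fun r ↦ r * f (r ^ 2)), smul_eq_mul,
    measureReal_restrict_apply_univ, Real.volume_real_Ioo_of_le (by linarith [pi_pos])]
  ring

lemma gaussianReal_prod_gaussianReal :
    (gaussianReal 0 1).prod (gaussianReal 0 1)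
      = volume.withDensity
          (fun p ↦ ENNReal.ofReal ((2 * π)⁻¹ * exp (-(p.1 ^ 2 + p.2 ^ 2) / 2))) := by
  rw [gaussianReal_of_var_ne_zero 0 one_ne_zero, prod_withDensity (measurable_gaussianPDF 0 1)
    (measurable_gaussianPDF 0 1), ← Measure.volume_eq_prod]
  congr with p
  simp only [gaussianPDF, gaussianPDFReal, NNReal.coe_one, mul_one, sub_zero]
  rw [← ENNReal.ofReal_mul (by positivity), mul_mul_mul_comm, ← exp_add, ← mul_inv,
    mul_self_sqrt (by positivity)]
  ring_nf

lemma gaussianReal_prod_gaussianReal_real_lt_sq_add_sq {c : ℝ} (hc : 0 ≤ c) :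
    ((gaussianReal 0 1).prod (gaussianReal 0 1)).real {p | c < p.1 ^ 2 + p.2 ^ 2}
      = exp (-c / 2) := by
  set φ : ℝ → ℝ := fun t ↦ (2 * π)⁻¹ * exp (-t / 2)
  have hS : MeasurableSet {p : ℝ × ℝ | c < p.1 ^ 2 + p.2 ^ 2} :=
    measurableSet_lt measurable_const (by fun_prop)
  have hradial : ∀ r ∈ Ioi (0 : ℝ), r * (Ioi c).indicator φ (r ^ 2)
      = (Ioi √c).indicator (fun r ↦ (2 * π)⁻¹ * (r * exp (-(1 / 2) * r ^ 2))) r := by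
    intro r hr
    have hmem : r ^ 2 ∈ Ioi c ↔ r ∈ Ioi √c := (sqrt_lt' hr).symm
    by_cases h : r ∈ Ioi √c
    · rw [indicator_of_mem (hmem.2 h), indicator_of_mem h]
      simp only [φ]
      ring_nf
    · rw [indicator_of_notMem (mt hmem.1 h), indicator_of_notMem h, mul_zero]
  rw [gaussianReal_prod_gaussianReal, measureReal_def, withDensity_apply _ hS,
    ← integral_eq_lintegral_of_nonneg_ae (ae_of_all _ fun p ↦ by positivity) (by fun_prop),
    ← integral_indicator hS]
  change ∫ p : ℝ × ℝ, (Ioi c).indicator φ (p.1 ^ 2 + p.2 ^ 2) = _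
  rw [integral_comp_sq_add_sq, setIntegral_congr_fun measurableSet_Ioi hradial,
    setIntegral_indicator measurableSet_Ioi, Ioi_inter_Ioi, sup_eq_right.2 (sqrt_nonneg c),
    integral_const_mul, integral_Ioi_mul_exp_neg_mul_sq one_half_pos, sq_sqrt hc]
  field_simp

/-- For `1 + 2 * b ≤ 0` both sides are the junk value `0`. -/
lemma integral_exp_neg_mul_sq_gaussianReal (b : ℝ) :
    ∫ z, exp (-b * z ^ 2) ∂gaussianReal 0 1 = (√(1 + 2 * b))⁻¹ := by
  have hdensity (z : ℝ) : gaussianPDFReal 0 1 z • exp (-b * z ^ 2)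
      = (√(2 * π))⁻¹ * exp (-(b + 1 / 2) * z ^ 2) := by
    simp only [gaussianPDFReal, NNReal.coe_one, mul_one, sub_zero, smul_eq_mul]
    rw [mul_assoc, ← exp_add]
    ring_nf
  simp_rw [integral_gaussianReal_eq_integral_smul one_ne_zero, hdensity]
  rw [integral_const_mul, integral_gaussian, ← sqrt_inv, ← sqrt_mul (by positivity),
    ← sqrt_inv]
  congr 1
  field_simp
  ring

lemma ProbabilityTheory.iIndepFun.map_prodMk_prodMk_eq_prod {Ω ι : Type*} {β : ι → Type*}
    [MeasurableSpace Ω] [∀ i, MeasurableSpace (β i)] {μ : Measure Ω} [IsFiniteMeasure μ]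
    {X : (i : ι) → Ω → β i} (h : iIndepFun X μ) (hX : ∀ i, Measurable (X i)) {i j k : ι}
    (hij : i ≠ j) (hik : i ≠ k) (hjk : j ≠ k) :
    μ.map (fun ω ↦ ((X i ω, X j ω), X k ω))
      = ((μ.map (X i)).prod (μ.map (X j))).prod (μ.map (X k)) := by
  rw [(indepFun_iff_map_prod_eq_prod_map_map ((hX i).prodMk (hX j)).aemeasurable
      (hX k).aemeasurable).1 (h.indepFun_prodMk hX i j k hik hjk),
    (indepFun_iff_map_prod_eq_prod_map_map (hX i).aemeasurable (hX j).aemeasurable).1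
      (h.indepFun hij)]

/-- For `Z₁, Z₂, Z₃` independent standard real Gaussians,
`P(Z₁² + Z₂² > 2 Z₃²) = 1/√3`. -/
theorem stmt12 {Ω : Type*} [MeasurableSpace Ω] (μ : Measure Ω) [IsProbabilityMeasure μ]
    (Z : Fin 3 → Ω → ℝ) (hm : ∀ i, Measurable (Z i))
    (hgauss : ∀ i, μ.map (Z i) = gaussianReal 0 1)
    (hindep : iIndepFun Z μ) :
    (μ {ω | (Z 0 ω) ^ 2 + (Z 1 ω) ^ 2 > 2 * (Z 2 ω) ^ 2}).toReal
      = 1 / Real.sqrt 3 := by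
  have hlaw := hindep.map_prodMk_prodMk_eq_prod hm (i := 0) (j := 1) (k := 2)
    (by decide) (by decide) (by decide)
  simp only [hgauss] at hlaw
  set T := {p : (ℝ × ℝ) × ℝ | 2 * p.2 ^ 2 < p.1.1 ^ 2 + p.1.2 ^ 2}
  have hT : MeasurableSet T := measurableSet_lt (by fun_prop) (by fun_prop)
  have hsection (z : ℝ) : ((gaussianReal 0 1).prod (gaussianReal 0 1)) ((·, z) ⁻¹' T)
      = ENNReal.ofReal (exp (-1 * z ^ 2)) := by
    rw [← ofReal_measureReal]
    simp only [T, preimage_ofPred_eq]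
    rw [gaussianReal_prod_gaussianReal_real_lt_sq_add_sq (by positivity)]
    ring_nf
  change (μ ((fun ω ↦ ((Z 0 ω, Z 1 ω), Z 2 ω)) ⁻¹' T)).toReal = _
  rw [← Measure.map_apply (by fun_prop) hT, hlaw, Measure.prod_apply_symm hT]
  simp_rw [hsection]
  rw [← integral_eq_lintegral_of_nonneg_ae (ae_of_all _ fun z ↦ by positivity) (by fun_prop),
    integral_exp_neg_mul_sq_gaussianReal]
  norm_num
end
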